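/- arXiv:1201.5316 — 2 statements merged into one kernel-verified Lean document; each statement's English description precedes it below -/
import Mathlib

section
/- Let F ∈ Lie_n[x,y] and write F = F_x·x + F_y·y. Then F_y is antipalindromic if and only if F is push-invariant. -/
/- Common setup: the ring ℚ⟨x,y⟩ of polynomials in two non-commuting variables,
   modelled as the monoid algebra of the free monoid on two letters
   (letter 0 ↦ x, letter 1 ↦ y). -/

abbrev Word := FreeMonoid (Fin 2)
abbrev R2 := MonoidAlgebra ℚ Word

noncomputable section
namespace DblSh

/-- The variable x. -/
def X : R2 := MonoidAlgebra.of ℚ Word (FreeMonoid.of 0)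
/-- The variable y. -/
def Y : R2 := MonoidAlgebra.of ℚ Word (FreeMonoid.of 1)
/-- The monomial associated to a word. -/
def mono (w : Word) : R2 := MonoidAlgebra.single w 1
/-- (f|w), the coefficient of the monomial w in f. -/
def coeff (f : R2) (w : Word) : ℚ := f.coeff w
/-- The pairing (f|g) = Σ_w (g|w)·(f|w), i.e. (f|·) extended linearly. -/
def pairing (f g : R2) : ℚ := Finsupp.sum g.coeff (fun w c => c * f.coeff w)
/-- Degree of a word. -/
def wlen (w : Word) : ℕ := (FreeMonoid.toList w).length
/-- Depth of a word: the number of letters y. -/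
def countY (w : Word) : ℕ := (FreeMonoid.toList w).count 1

attribute [local instance 100] LieRing.ofAssociativeRing

/-- Lie[x,y]: the Lie subalgebra of ℚ⟨x,y⟩ generated by x and y (the free Lie algebra). -/
def LieP : LieSubalgebra ℚ R2 := LieSubalgebra.lieSpan ℚ R2 {X, Y}
/-- f is homogeneous of degree n. -/
def IsHomog (n : ℕ) (f : R2) : Prop := ∀ w ∈ f.coeff.support, wlen w = n
/-- f ∈ Lie_n[x,y]. -/
def InLieN (n : ℕ) (f : R2) : Prop := f ∈ LieP ∧ IsHomog n f

/-- `anti` on words: reversal. -/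
def antiW (w : Word) : Word := FreeMonoid.ofList (FreeMonoid.toList w).reverse
/-- The linear operator `anti` reversing each monomial. -/
def anti (f : R2) : R2 := MonoidAlgebra.ofCoeff (Finsupp.mapDomain antiW f.coeff)
/-- f (homogeneous of degree m) is antipalindromic: f = (−1)^m · anti f. -/
def Antipal (m : ℕ) (f : R2) : Prop := f = ((-1 : ℚ))^m • anti f

/-- `push` on a word containing at least one y:
    push(x^{a₀}y⋯y x^{a_{r-1}} y x^{a_r}) = x^{a_r} y x^{a₀} y ⋯ y x^{a_{r-1}};
    words with no y are left fixed. -/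
def pushW (w : Word) : Word :=
  let l := (FreeMonoid.toList w).reverse
  let t := l.takeWhile (fun c => c = 0)
  match l.dropWhile (fun c => c = 0) with
  | [] => w
  | _ :: rest => FreeMonoid.ofList (t.reverse ++ (1 :: rest.reverse))
/-- `push` extended linearly to polynomials. -/
def pushP (f : R2) : R2 := MonoidAlgebra.ofCoeff (Finsupp.mapDomain pushW f.coeff)
/-- The list Push(w) of the r+1 iterates of push on w (r = depth of w). -/
def PushList (w : Word) : List Word := (List.range (countY w + 1)).map (fun k => pushW^[k] w)
/-- The word y^m. -/
def yPow (m : ℕ) : Word := FreeMonoid.ofList (List.replicate m 1)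
/-- f (homogeneous of degree m) is push-constant for the constant A. -/
def PushConst (m : ℕ) (f : R2) (A : ℚ) : Prop :=
  coeff f (yPow m) = 0 ∧
  ∀ w : Word, wlen w = m → w ≠ yPow m → ((PushList w).map (fun v => coeff f v)).sum = A

/-- ∂_x on a word (Leibniz expansion). -/
def dxW (w : Word) : R2 :=
  ∑ i ∈ Finset.range (wlen w),
    if (FreeMonoid.toList w).getD i 1 = 0
    then mono (FreeMonoid.ofList ((FreeMonoid.toList w).eraseIdx i)) else 0
/-- The derivation ∂_x of ℚ⟨x,y⟩, with ∂_x(x) = 1 and ∂_x(y) = 0. -/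
def dx (f : R2) : R2 := Finsupp.sum f.coeff (fun w c => c • dxW w)
/-- s(h) = Σ_{i≥0} ((−1)^i/i!)·∂_x^i(h)·y·x^i. -/
def sMap (h : R2) : R2 := ∑ᶠ i : ℕ, ((-1 : ℚ)^i / (i.factorial : ℚ)) • (dx^[i] h * Y * X ^ i)
/-- s'(h) = Σ_{i≥0} ((−1)^i/i!)·x^i·y·∂_x^i(h). -/
def s'Map (h : R2) : R2 := ∑ᶠ i : ℕ, ((-1 : ℚ)^i / (i.factorial : ℚ)) • (X ^ i * Y * dx^[i] h)

/-- The algebra endomorphism of ℚ⟨x,y⟩ with x ↦ a, y ↦ b. -/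
def subst (a b : R2) : R2 →ₐ[ℚ] R2 :=
  MonoidAlgebra.lift ℚ R2 Word (FreeMonoid.lift (fun i : Fin 2 => if i = 0 then a else b))

/-- The value on a word of the derivation of ℚ⟨x,y⟩ with x ↦ a, y ↦ b (Leibniz expansion). -/
def derW (a b : R2) (w : Word) : R2 :=
  ∑ i ∈ Finset.range (wlen w),
    mono (FreeMonoid.ofList ((FreeMonoid.toList w).take i)) *
      (if (FreeMonoid.toList w).getD i 1 = 0 then a else b) *
      mono (FreeMonoid.ofList ((FreeMonoid.toList w).drop (i+1)))
/-- The derivation of ℚ⟨x,y⟩ with x ↦ a, y ↦ b. -/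
def derP (a b : R2) (f : R2) : R2 := Finsupp.sum f.coeff (fun w c => c • derW a b w)
/-- The derivation D_{F,G} with x ↦ [x,G], y ↦ [y,F]. -/
def DFG (F G : R2) : R2 → R2 := derP (X * G - G * X) (Y * F - F * Y)

/-- The subspace of ℚ⟨x,y⟩ spanned by all commutators ab − ba. -/
def trIdeal : Submodule ℚ R2 := Submodule.span ℚ {c : R2 | ∃ a b : R2, c = a * b - b * a}
/-- TR, the trace space. -/
abbrev TRsp := R2 ⧸ trIdeal
/-- The trace map tr : ℚ⟨x,y⟩ → TR. -/
def trQ : R2 →ₗ[ℚ] TRsp := trIdeal.mkQ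

/-- Generators of krv2: the special derivations D_{F,G}, F,G ∈ Lie_n[x,y] (n ≥ 1),
    satisfying the trace condition tr(F_y·y + G_x·x) = A·tr((x+y)^n − x^n − y^n). -/
def krvGens : Set (R2 → R2) :=
  {D | ∃ n : ℕ, 1 ≤ n ∧ ∃ F G : R2, InLieN n F ∧ InLieN n G ∧ D = DFG F G ∧
    (X * G - G * X) + (Y * F - F * Y) = 0 ∧
    ∃ Fx Fy Gx Gy : R2, F = Fx * X + Fy * Y ∧ G = Gx * X + Gy * Y ∧
      ∃ A : ℚ, trQ (Fy * Y + Gx * X) = A • trQ ((X + Y)^n - X^n - Y^n)}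
/-- The Kashiwara–Vergne Lie algebra krv2, as a space of operators. -/
def krv2 : Submodule ℚ (R2 → R2) := Submodule.span ℚ krvGens

/-- The space V_kv of Theorem 1.2. -/
def Vkv : Submodule ℚ R2 :=
  Submodule.span ℚ {F : R2 | ∃ n : ℕ, 3 ≤ n ∧ InLieN n F ∧
    ∃ Fx Fy : R2, F = Fx * X + Fy * Y ∧ Antipal (n-1) Fy ∧ ∃ A : ℚ, PushConst (n-1) (Fy - Fx) A}

/-- y_i = x^{i-1}y. -/
def yi (i : ℕ) : Word := FreeMonoid.ofList (List.replicate (i - 1) 0 ++ [1])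
/-- The word y_{i₁}⋯y_{i_k} associated to a composition (i₁,…,i_k). -/
def wordOfComp (l : List ℕ) : Word := (l.map yi).prod
/-- The stuffle product of two words ending in y, encoded as compositions. -/
def st : List ℕ → List ℕ → R2
  | [], v => mono (wordOfComp v)
  | u, [] => mono (wordOfComp u)
  | i :: u, j :: v =>
      mono (yi i) * st u (j :: v) + mono (yi j) * st (i :: u) v + mono (yi (i + j)) * st u v
termination_by u v => u.length + v.length

/-- Membership in the double shuffle Lie algebra ds. -/
def inDS (f : R2) : Prop :=
  f ∈ LieP ∧ (∀ w ∈ f.coeff.support, 3 ≤ wlen w) ∧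
  ∀ u v : List ℕ, u ≠ [] → v ≠ [] → (∀ i ∈ u, 1 ≤ i) → (∀ i ∈ v, 1 ≤ i) →
    ¬((∀ i ∈ u, i = 1) ∧ (∀ i ∈ v, i = 1)) → pairing f (st u v) = 0
/-- Membership in ds_n = ds ∩ Lie_n[x,y]. -/
def inDSn (n : ℕ) (f : R2) : Prop := inDS f ∧ IsHomog n f

/-- The derivation D_f with x ↦ 0, y ↦ [y,f]. -/
def Dlow (f : R2) : R2 → R2 := derP 0 (Y * f - f * Y)
/-- The Poisson bracket {f,g} = [f,g] + D_f(g) − D_g(f). -/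
def poisson (f g : R2) : R2 := (f * g - g * f) + Dlow f g - Dlow g f

/-- The projection f ↦ f^x, where f = x·f^x + y·f^y (f without constant term). -/
def compL (f : R2) : R2 :=
  MonoidAlgebra.ofCoeff (Finsupp.comapDomain (fun w : Word => FreeMonoid.of 0 * w) f.coeff
    (Set.injOn_of_injective (mul_right_injective (FreeMonoid.of 0))))

/-!
Lie elements are primitive, so the antipode `w ↦ (-1)^|w| anti(w)` of ℚ⟨x,y⟩ negates them, and
the derivation `∂_x` (with `∂_x x = 1`, `∂_x y = 0`) sends them to constants. For homogeneous `F`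
the first fact turns antipalindromy of `F_y` into the symmetry `(F | u y) = (F | y u)` for all
words `u`. This symmetry says that `G = push F - F` vanishes on words beginning with `y`. As `∂_x`
commutes with `push` and `push 1 = 1`, also `∂_x G = 0`; read coefficientwise, this relation
propagates the vanishing of `G` to words with any number of leading `x`'s.
-/

open FreeMonoid (of ofList toList)
open Finset (range)

section ListLemmas
variable {α : Type*}

lemma insertIdx_replicate_append {a j : ℕ} (h : j ≤ a) (x : α) (s : List α) :
    (List.replicate a x ++ s).insertIdx j x = List.replicate (a + 1) x ++ s := by
  induction j generalizing a with
  | zero => simp [List.replicate_succ]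
  | succ j ih =>
    obtain ⟨a, rfl⟩ : ∃ b, a = b + 1 := ⟨a - 1, by omega⟩
    simp [List.replicate_succ, List.insertIdx_succ_cons, ih (Nat.le_of_succ_le_succ h)]

lemma insertIdx_append_length_add (s r : List α) (m : ℕ) (x : α) :
    (s ++ r).insertIdx (s.length + m) x = s ++ r.insertIdx m x := by
  induction s with
  | nil => simp
  | cons y s ih => simp [Nat.succ_add, List.insertIdx_succ_cons, ih]

lemma eraseIdx_eq_iff_insertIdx_eq {w v : List α} {i : ℕ} {x d : α} :
    (i < w.length ∧ w.getD i d = x ∧ w.eraseIdx i = v) ↔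
      (i < v.length + 1 ∧ v.insertIdx i x = w) := by
  constructor
  · rintro ⟨hi, rfl, rfl⟩
    refine ⟨by rw [List.length_eraseIdx_of_lt hi]; omega, ?_⟩
    rw [List.getD_eq_getElem _ _ hi, List.insertIdx_eraseIdx_getElem hi]
  · rintro ⟨hi, rfl⟩
    have hi' : i ≤ v.length := Nat.le_of_lt_succ hi
    refine ⟨by rw [List.length_insertIdx_of_le_length hi']; omega, ?_,
      List.eraseIdx_insertIdx_self x⟩
    rw [List.getD_eq_getElem _ _ (by rw [List.length_insertIdx_of_le_length hi']; omega),
      List.getElem_insertIdx_self]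

end ListLemmas

lemma toList_of_pow {α : Type*} (c : α) (a : ℕ) : toList (of c ^ a) = List.replicate a c := by
  induction a with
  | zero => rfl
  | succ a ih => rw [pow_succ, FreeMonoid.toList_mul, ih, List.replicate_succ']; rfl

lemma wlen_mul (u v : Word) : wlen (u * v) = wlen u + wlen v := by
  simp [wlen]

lemma wlen_of_pow (c : Fin 2) (a : ℕ) : wlen (of c ^ a) = a := by
  rw [wlen, toList_of_pow, List.length_replicate]

lemma antiW_of (c : Fin 2) : antiW (of c) = of c := rfl

lemma antiW_mul (u v : Word) : antiW (u * v) = antiW v * antiW u := by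
  simp [antiW]

lemma antiW_antiW (w : Word) : antiW (antiW w) = w := by
  simp [antiW]

lemma antiW_of_pow (c : Fin 2) (a : ℕ) : antiW (of c ^ a) = of c ^ a := by
  rw [antiW, toList_of_pow, List.reverse_replicate, ← toList_of_pow, FreeMonoid.ofList_toList]

lemma wlen_antiW (w : Word) : wlen (antiW w) = wlen w := by
  simp [wlen, antiW]

lemma word_cases_left (w : Word) :
    (∃ m, w = of 0 ^ m) ∨ ∃ a t, w = of 0 ^ a * of 1 * t := by
  induction w using FreeMonoid.inductionOn' with
  | one => exact Or.inl ⟨0, rfl⟩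
  | of_mul c w ih =>
    fin_cases c
    · rcases ih with ⟨m, rfl⟩ | ⟨a, t, rfl⟩
      · exact Or.inl ⟨m + 1, by rw [pow_succ']; rfl⟩
      · exact Or.inr ⟨a + 1, t, by simp [pow_succ', mul_assoc]⟩
    · exact Or.inr ⟨0, w, by simp⟩

lemma word_cases_right (w : Word) :
    (∃ m, w = of 0 ^ m) ∨ ∃ u a, w = u * of 1 * of 0 ^ a := by
  rcases word_cases_left (antiW w) with ⟨m, h⟩ | ⟨a, t, h⟩
  · exact Or.inl ⟨m, by rw [← antiW_antiW w, h, antiW_of_pow]⟩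
  · refine Or.inr ⟨antiW t, a, ?_⟩
    rw [← antiW_antiW w, h, antiW_mul, antiW_mul, antiW_of_pow, mul_assoc]
    rfl

lemma takeWhile_replicate_append_one (a : ℕ) (t : List (Fin 2)) :
    (List.replicate a 0 ++ 1 :: t).takeWhile (· = 0) = List.replicate a 0 := by
  induction a with
  | zero => simp
  | succ a ih => simp [List.replicate_succ, ih]

lemma dropWhile_replicate_append_one (a : ℕ) (t : List (Fin 2)) :
    (List.replicate a 0 ++ 1 :: t).dropWhile (· = 0) = 1 :: t := by
  induction a with
  | zero => simp
  | succ a ih => simp [List.replicate_succ, ih]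

lemma pushW_mul_of_one_mul_pow (u : Word) (a : ℕ) :
    pushW (u * of 1 * of 0 ^ a) = of 0 ^ a * of 1 * u := by
  have hrev : (toList (u * of 1 * of 0 ^ a)).reverse =
      List.replicate a 0 ++ 1 :: (toList u).reverse := by
    simp [toList_of_pow]
  simp only [pushW, hrev, takeWhile_replicate_append_one, dropWhile_replicate_append_one]
  rw [List.reverse_replicate, List.reverse_reverse, FreeMonoid.ofList_append,
    FreeMonoid.ofList_cons, ← toList_of_pow, FreeMonoid.ofList_toList, FreeMonoid.ofList_toList,
    mul_assoc]

lemma pushW_mul_of_one (u : Word) : pushW (u * of 1) = of 1 * u := by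
  simpa using pushW_mul_of_one_mul_pow u 0

lemma pushW_of_pow (m : ℕ) : pushW (of 0 ^ m) = of 0 ^ m := by
  simp [pushW, toList_of_pow]

-- `(anti ∘ push) (u y x^a) = anti(u) y x^a`
lemma antiW_comp_pushW_involutive : Function.Involutive (antiW ∘ pushW) := by
  intro w
  rcases word_cases_right w with ⟨m, rfl⟩ | ⟨u, a, rfl⟩
  · simp [pushW_of_pow, antiW_of_pow]
  · simp only [Function.comp_apply]
    rw [pushW_mul_of_one_mul_pow, antiW_mul, antiW_mul, antiW_of, antiW_of_pow, ← mul_assoc,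
      pushW_mul_of_one_mul_pow, antiW_mul, antiW_mul, antiW_of, antiW_of_pow, antiW_antiW,
      mul_assoc]

lemma pushW_injective : Function.Injective pushW :=
  fun _ _ h => antiW_comp_pushW_involutive.injective (congrArg antiW h)

lemma single_eq_smul_mono (w : Word) (c : ℚ) : MonoidAlgebra.single w c = c • mono w := by
  rw [mono, MonoidAlgebra.smul_single, smul_eq_mul, mul_one]

lemma mono_mul (u v : Word) : mono (u * v) = mono u * mono v := by
  simp [mono, MonoidAlgebra.single_mul_single]

lemma X_pow (a : ℕ) : X ^ a = mono (of 0 ^ a) := by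
  simp [X, mono, MonoidAlgebra.single_pow]

lemma mono_mul_of_one_mul_pow (u : Word) (a : ℕ) :
    mono (u * of 1 * of 0 ^ a) = mono u * Y * X ^ a := by
  rw [mono_mul, mono_mul, X_pow]; rfl

lemma coeff_anti (f : R2) (v : Word) : (anti f).coeff v = f.coeff (antiW v) := by
  conv_lhs => rw [← antiW_antiW v]
  exact Finsupp.mapDomain_apply (Function.LeftInverse.injective antiW_antiW) _ _

lemma coeff_mul_X_add_mul_Y (Fx Fy : R2) (u : Word) :
    (Fx * X + Fy * Y).coeff (u * of 1) = Fy.coeff u := by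
  have hne : ∀ d : Word, d * of 0 ≠ u * of 1 := fun d h => by
    simpa using congrArg (fun w : Word => (toList w).getLast?) h
  rw [MonoidAlgebra.coeff_add, Finsupp.add_apply, X, Y, MonoidAlgebra.of_apply,
    MonoidAlgebra.of_apply, MonoidAlgebra.coeff_mul_single_of_forall_mul_ne _ _ hne,
    MonoidAlgebra.coeff_mul_single_mul, zero_add, mul_one]

def pushLin : R2 →ₗ[ℚ] R2 := MonoidAlgebra.mapDomainLinearMap ℚ ℚ pushW

lemma pushLin_apply (f : R2) : pushLin f = pushP f := rfl

lemma pushLin_mono (w : Word) : pushLin (mono w) = mono (pushW w) :=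
  MonoidAlgebra.mapDomainLinearMap_single _ _ _

lemma coeff_pushLin_pushW (f : R2) (w : Word) : (pushLin f).coeff (pushW w) = f.coeff w :=
  Finsupp.mapDomain_apply pushW_injective _ _

lemma pushLin_X_pow (m : ℕ) : pushLin (X ^ m) = X ^ m := by
  rw [X_pow, pushLin_mono, pushW_of_pow]

lemma pushLin_mul_Y_mul_X_pow (g : R2) (a : ℕ) : pushLin (g * Y * X ^ a) = X ^ a * Y * g := by
  induction g using MonoidAlgebra.induction_linear with
  | zero => simp
  | add f g hf hg => simp only [add_mul, mul_add, map_add, hf, hg]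
  | single w c =>
    rw [single_eq_smul_mono, smul_mul_assoc, smul_mul_assoc, map_smul, ← mono_mul_of_one_mul_pow,
      pushLin_mono, pushW_mul_of_one_mul_pow, mono_mul, mono_mul, ← X_pow, mul_smul_comm]
    rfl

/-- `dx`, bundled as a linear map. -/
def dxLin : R2 →ₗ[ℚ] R2 :=
  Finsupp.linearCombination ℚ dxW ∘ₗ (MonoidAlgebra.coeffLinearEquiv ℚ).toLinearMap

lemma dxLin_single (w : Word) (c : ℚ) : dxLin (MonoidAlgebra.single w c) = c • dxW w :=
  Finsupp.linearCombination_single ℚ c w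

lemma dxLin_mono (w : Word) : dxLin (mono w) = dxW w := by
  rw [mono, dxLin_single, one_smul]

lemma dxW_mul (u v : Word) : dxW (u * v) = dxW u * mono v + mono u * dxW v := by
  have hlen : wlen (u * v) = wlen u + wlen v := wlen_mul u v
  rw [dxW, hlen, Finset.sum_range_add, dxW, dxW, Finset.sum_mul, Finset.mul_sum]
  simp only [wlen]
  congr 1
  · refine Finset.sum_congr rfl fun i hi => ?_
    have hi : i < (toList u).length := Finset.mem_range.mp hi
    rw [FreeMonoid.toList_mul, List.getD_append _ _ _ _ hi, List.eraseIdx_append_of_lt_length hi,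
      ite_mul, zero_mul, FreeMonoid.ofList_append, FreeMonoid.ofList_toList, mono_mul]
  · refine Finset.sum_congr rfl fun i _ => ?_
    have hle : (toList u).length ≤ (toList u).length + i := Nat.le_add_right _ _
    simp only [FreeMonoid.toList_mul, List.getD_append_right _ _ _ _ hle,
      List.eraseIdx_append_of_length_le hle, Nat.add_sub_cancel_left, mul_ite, mul_zero,
      FreeMonoid.ofList_append, FreeMonoid.ofList_toList, mono_mul]

lemma dxLin_mul (f g : R2) : dxLin (f * g) = dxLin f * g + f * dxLin g := by
  induction f using MonoidAlgebra.induction_linear with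
  | zero => simp
  | add f₁ f₂ h₁ h₂ => simp only [add_mul, map_add, h₁, h₂]; abel
  | single u c =>
    induction g using MonoidAlgebra.induction_linear with
    | zero => simp
    | add g₁ g₂ h₁ h₂ => simp only [mul_add, map_add, h₁, h₂]; abel
    | single v d =>
      simp only [single_eq_smul_mono, ← mono_mul, map_smul, dxLin_mono,
        dxW_mul, smul_add, smul_mul_assoc, mul_smul_comm, smul_smul, mul_comm d c]

lemma dxLin_X : dxLin X = 1 := by
  simp [X, dxLin_single, dxW, wlen, mono, MonoidAlgebra.one_def]

lemma dxLin_Y : dxLin Y = 0 := by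
  simp [Y, dxLin_single, dxW, wlen]

lemma dxLin_X_pow (a : ℕ) : dxLin (X ^ a) = (a : ℚ) • X ^ (a - 1) := by
  induction a with
  | zero => simp [MonoidAlgebra.one_def, dxLin_single, dxW, wlen]
  | succ a ih =>
    rw [pow_succ, dxLin_mul, ih, dxLin_X, mul_one, smul_mul_assoc]
    rcases a with _ | a
    · simp
    · simp [← pow_succ, add_smul]

lemma dxLin_mul_Y_mul (g h : R2) : dxLin (g * Y * h) = dxLin g * Y * h + g * Y * dxLin h := by
  rw [dxLin_mul, dxLin_mul, dxLin_Y, mul_zero, add_zero]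

lemma dxLin_pushLin (f : R2) : dxLin (pushLin f) = pushLin (dxLin f) := by
  induction f using MonoidAlgebra.induction_linear with
  | zero => simp
  | add f g hf hg => simp only [map_add, hf, hg]
  | single w c =>
    rw [single_eq_smul_mono, map_smul, map_smul, map_smul, map_smul]
    congr 1
    rcases word_cases_right w with ⟨m, rfl⟩ | ⟨u, a, rfl⟩
    · rw [← X_pow, pushLin_X_pow, dxLin_X_pow, map_smul, pushLin_X_pow]
    · rw [mono_mul_of_one_mul_pow, pushLin_mul_Y_mul_X_pow, dxLin_mul_Y_mul, dxLin_mul_Y_mul,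
        map_add, pushLin_mul_Y_mul_X_pow, dxLin_X_pow, mul_smul_comm, map_smul,
        pushLin_mul_Y_mul_X_pow, smul_mul_assoc, smul_mul_assoc, add_comm]

def insX (v : Word) (j : ℕ) : Word := ofList ((toList v).insertIdx j 0)

lemma coeff_dxW (w v : Word) :
    (dxW w).coeff v = ∑ j ∈ range (wlen v + 1), (mono w).coeff (insX v j) := by
  classical
  have hpos : ∀ i,
      (i < wlen w ∧ (toList w).getD i 1 = 0 ∧ ofList ((toList w).eraseIdx i) = v) ↔
        (i < wlen v + 1 ∧ w = insX v i) := fun i => by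
    simpa [insX, wlen, ← FreeMonoid.ofList.eq_symm_apply, eq_comm (a := w)] using
      eraseIdx_eq_iff_insertIdx_eq (w := toList w) (v := toList v) (i := i) (x := 0) (d := 1)
  rw [dxW, MonoidAlgebra.coeff_sum, Finsupp.finsetSum_apply]
  simp only [mono, MonoidAlgebra.coeff_single, Finsupp.single_apply, MonoidAlgebra.coeff_zero,
    apply_ite (fun f : R2 => f.coeff v), Finsupp.coe_zero, Pi.zero_apply, ← ite_and]
  rw [Finset.sum_boole, Finset.sum_boole]
  congr 2
  ext i
  simpa only [Finset.mem_filter, Finset.mem_range] using hpos i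

lemma coeff_dxLin (f : R2) (v : Word) :
    (dxLin f).coeff v = ∑ j ∈ range (wlen v + 1), f.coeff (insX v j) := by
  induction f using MonoidAlgebra.induction_linear with
  | zero => simp
  | add f g hf hg =>
    simp only [map_add, MonoidAlgebra.coeff_add, Finsupp.add_apply, hf, hg, Finset.sum_add_distrib]
  | single w c =>
    rw [dxLin_single, MonoidAlgebra.coeff_smul_apply, coeff_dxW, Finset.smul_sum]
    simp only [single_eq_smul_mono, MonoidAlgebra.coeff_smul_apply]

lemma insX_of_pow_mul {a j : ℕ} (h : j ≤ a) (s : Word) :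
    insX (of 0 ^ a * s) j = of 0 ^ (a + 1) * s := by
  rw [insX, FreeMonoid.toList_mul, toList_of_pow, insertIdx_replicate_append h,
    FreeMonoid.ofList_append, ← toList_of_pow, FreeMonoid.ofList_toList, FreeMonoid.ofList_toList]

lemma insX_of_pow {m j : ℕ} (h : j ≤ m) : insX (of 0 ^ m) j = of 0 ^ (m + 1) := by
  simpa using insX_of_pow_mul h 1

lemma insX_mul_wlen_add (s r : Word) (m : ℕ) : insX (s * r) (wlen s + m) = s * insX r m := by
  simp only [insX, FreeMonoid.toList_mul, wlen, insertIdx_append_length_add]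
  rfl

/- Induction on the number of leading `x`'s: at `v = x^a y t`, the relation
`∑ j, (G | insX v j) = 0` reads `(a + 1) (G | x^(a+1) y t) + ∑ k, (G | x^a y (insX t k)) = 0`.
-/
lemma eq_zero_of_dxLin_eq_zero {G : R2} (hdx : dxLin G = 0) (hone : G.coeff 1 = 0)
    (hY : ∀ u, G.coeff (of 1 * u) = 0) : G = 0 := by
  have hsum : ∀ v, ∑ j ∈ range (wlen v + 1), G.coeff (insX v j) = 0 := fun v => by
    rw [← coeff_dxLin, hdx]; rfl
  have hpow : ∀ m, G.coeff (of 0 ^ m) = 0 := by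
    rintro (_ | m)
    · exact hone
    · have h := hsum (of 0 ^ m)
      rw [wlen_of_pow, Finset.sum_congr rfl fun j hj =>
        by rw [insX_of_pow (Nat.le_of_lt_succ (Finset.mem_range.mp hj))],
        Finset.sum_const, Finset.card_range] at h
      exact (smul_eq_zero.mp h).resolve_left m.succ_ne_zero
  have hlead : ∀ a t, G.coeff (of 0 ^ a * of 1 * t) = 0 := by
    intro a
    induction a with
    | zero => simpa using hY
    | succ a ih =>
      intro t
      have hlen : wlen (of 0 ^ a * of 1) = a + 1 := by rw [wlen_mul, wlen_of_pow]; rfl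
      have hfirst : ∑ j ∈ range (a + 1), G.coeff (insX (of 0 ^ a * of 1 * t) j) =
          (a + 1) • G.coeff (of 0 ^ (a + 1) * of 1 * t) := by
        rw [Finset.sum_congr rfl fun j hj => by
            rw [mul_assoc, insX_of_pow_mul (Nat.le_of_lt_succ (Finset.mem_range.mp hj)),
              ← mul_assoc],
          Finset.sum_const, Finset.card_range]
      have hrest :
          ∑ k ∈ range (wlen t + 1), G.coeff (insX (of 0 ^ a * of 1 * t) (a + 1 + k)) = 0 :=
        Finset.sum_eq_zero fun k _ => by rw [← hlen, insX_mul_wlen_add, ih]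
      have h := hsum (of 0 ^ a * of 1 * t)
      rw [wlen_mul, hlen, add_assoc, Finset.sum_range_add, hfirst, hrest, add_zero] at h
      exact (smul_eq_zero.mp h).resolve_left a.succ_ne_zero
  ext w
  rcases word_cases_left w with ⟨m, rfl⟩ | ⟨a, t, rfl⟩
  · exact hpow m
  · exact hlead a t

def antipode : R2 →ₗ[ℚ] R2 :=
  Finsupp.linearCombination ℚ (fun w : Word => (-1 : ℚ) ^ wlen w • mono (antiW w)) ∘ₗ
    (MonoidAlgebra.coeffLinearEquiv ℚ).toLinearMap

lemma antipode_single (w : Word) (c : ℚ) :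
    antipode (MonoidAlgebra.single w c) = c • (-1 : ℚ) ^ wlen w • mono (antiW w) :=
  Finsupp.linearCombination_single ℚ c w

lemma antipode_mono (w : Word) : antipode (mono w) = (-1 : ℚ) ^ wlen w • mono (antiW w) := by
  rw [mono, antipode_single, one_smul]

lemma antipode_mul (f g : R2) : antipode (f * g) = antipode g * antipode f := by
  induction f using MonoidAlgebra.induction_linear with
  | zero => simp
  | add f₁ f₂ h₁ h₂ => simp only [add_mul, mul_add, map_add, h₁, h₂]
  | single u c =>
    induction g using MonoidAlgebra.induction_linear with
    | zero => simp
    | add g₁ g₂ h₁ h₂ => simp only [mul_add, add_mul, map_add, h₁, h₂]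
    | single v d =>
      simp only [single_eq_smul_mono, ← mono_mul, map_smul, antipode_mono, antiW_mul, wlen_mul,
        pow_add, smul_mul_assoc, mul_smul_comm, smul_smul]
      congr 1
      ring

lemma coeff_antipode (f : R2) (v : Word) :
    (antipode f).coeff v = (-1 : ℚ) ^ wlen v * f.coeff (antiW v) := by
  classical
  induction f using MonoidAlgebra.induction_linear with
  | zero => simp
  | add f g hf hg =>
    simp only [map_add, MonoidAlgebra.coeff_add, Finsupp.add_apply, hf, hg, mul_add]
  | single w c =>
    rw [antipode_single]
    simp only [mono, MonoidAlgebra.coeff_smul_apply, MonoidAlgebra.coeff_single,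
      Finsupp.single_apply]
    by_cases h : w = antiW v
    · subst h
      simp only [antiW_antiW, wlen_antiW, if_true, smul_eq_mul]
      ring
    · have h' : antiW w ≠ v := fun h' => h (by rw [← h', antiW_antiW])
      simp [h, h']

def antipodeNegLie : LieSubalgebra ℚ R2 where
  carrier := {f | antipode f = -f}
  add_mem' {f g} (hf : antipode f = -f) (hg : antipode g = -g) :=
    show antipode (f + g) = -(f + g) by rw [map_add, hf, hg, neg_add]
  zero_mem' := show antipode 0 = -0 by simp
  smul_mem' c f (hf : antipode f = -f) :=
    show antipode (c • f) = -(c • f) by rw [map_smul, hf, smul_neg]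
  lie_mem' {f g} (hf : antipode f = -f) (hg : antipode g = -g) :=
    show antipode ⁅f, g⁆ = -⁅f, g⁆ by
      rw [Ring.lie_def, map_sub, antipode_mul, antipode_mul, hf, hg, neg_mul_neg, neg_mul_neg,
        neg_sub]

def dxConstLie : LieSubalgebra ℚ R2 where
  carrier := {f | dxLin f ∈ ℚ ∙ (1 : R2)}
  add_mem' {f g} (hf : dxLin f ∈ ℚ ∙ 1) (hg : dxLin g ∈ ℚ ∙ 1) :=
    show dxLin (f + g) ∈ ℚ ∙ 1 by rw [map_add]; exact Submodule.add_mem _ hf hg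
  zero_mem' := show dxLin 0 ∈ ℚ ∙ 1 by simp
  smul_mem' c f (hf : dxLin f ∈ ℚ ∙ 1) :=
    show dxLin (c • f) ∈ ℚ ∙ 1 by rw [map_smul]; exact Submodule.smul_mem _ c hf
  lie_mem' {f g} (hf : dxLin f ∈ ℚ ∙ 1) (hg : dxLin g ∈ ℚ ∙ 1) := by
    obtain ⟨a, ha⟩ := Submodule.mem_span_singleton.mp hf
    obtain ⟨b, hb⟩ := Submodule.mem_span_singleton.mp hg
    have : dxLin ⁅f, g⁆ = 0 := by
      rw [Ring.lie_def, map_sub, dxLin_mul, dxLin_mul, ← ha, ← hb]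
      simp only [smul_mul_assoc, mul_smul_comm, one_mul, mul_one]
      abel
    show dxLin ⁅f, g⁆ ∈ ℚ ∙ 1
    rw [this]
    exact Submodule.zero_mem _

lemma LieP_le_antipodeNegLie : LieP ≤ antipodeNegLie := by
  refine LieSubalgebra.lieSpan_le.mpr ?_
  rintro _ (rfl | rfl)
  · show antipode X = -X
    simp [X, antipode_single, wlen, antiW_of, mono]
  · show antipode Y = -Y
    simp [Y, antipode_single, wlen, antiW_of, mono]

lemma LieP_le_dxConstLie : LieP ≤ dxConstLie := by
  refine LieSubalgebra.lieSpan_le.mpr ?_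
  rintro _ (rfl | rfl)
  · simp [dxConstLie, dxLin_X]
  · simp [dxConstLie, dxLin_Y]

lemma coeff_antiW_of_antipode_eq_neg {n : ℕ} {F : R2} (hS : antipode F = -F) (hF : IsHomog n F)
    (v : Word) : F.coeff (antiW v) = (-1) ^ (n + 1) * F.coeff v := by
  have hv := congrArg (fun f : R2 => f.coeff v) hS
  simp only [coeff_antipode, MonoidAlgebra.coeff_neg, Finsupp.neg_apply] at hv
  by_cases hn : wlen v = n
  · rw [hn] at hv
    have hsq : ((-1 : ℚ) ^ n) ^ 2 = 1 := by rw [← pow_mul, pow_mul', neg_one_sq, one_pow]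
    linear_combination (-1 : ℚ) ^ n * hv - F.coeff (antiW v) * hsq
  · have h1 : F.coeff v = 0 := Finsupp.notMem_support_iff.mp fun h => hn (hF v h)
    have h2 : F.coeff (antiW v) = 0 :=
      Finsupp.notMem_support_iff.mp fun h => hn (wlen_antiW v ▸ hF _ h)
    rw [h1, h2, mul_zero]

def IsYCyclic (F : R2) : Prop := ∀ u, F.coeff (u * of 1) = F.coeff (of 1 * u)

lemma antipal_iff_isYCyclic {n : ℕ} {F Fx Fy : R2} (hHom : IsHomog n F)
    (hrev : ∀ v, F.coeff (antiW v) = (-1) ^ (n + 1) * F.coeff v) (hdec : F = Fx * X + Fy * Y) :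
    Antipal (n - 1) Fy ↔ IsYCyclic F := by
  have hFy : ∀ u, Fy.coeff u = F.coeff (u * of 1) := fun u => by rw [hdec, coeff_mul_X_add_mul_Y]
  rw [Antipal, ← MonoidAlgebra.coeff_inj, Finsupp.ext_iff]
  refine forall_congr' fun u => ?_
  have hsign :
      (-1 : ℚ) ^ (n - 1) * ((-1) ^ (n + 1) * F.coeff (of 1 * u)) = F.coeff (of 1 * u) := by
    rcases n with _ | k
    -- `n - 1` truncates to `0` here; the sign is wrong, but both sides vanish by homogeneity.
    · have : F.coeff (of 1 * u) = 0 := Finsupp.notMem_support_iff.mp fun h => by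
        simpa [wlen_mul, wlen] using hHom _ h
      rw [this, mul_zero, mul_zero]
    · rw [← mul_assoc, ← pow_add, show k + 1 - 1 + (k + 1 + 1) = 2 * (k + 1) by omega, pow_mul,
        neg_one_sq, one_pow, one_mul]
  have hrev_u : antiW u * of 1 = antiW (of 1 * u) := by rw [antiW_mul, antiW_of]
  rw [MonoidAlgebra.coeff_smul_apply, coeff_anti, hFy, hFy, smul_eq_mul, hrev_u, hrev, hsign]

lemma pushP_eq_self_iff_isYCyclic {F : R2} (hF : dxLin F ∈ ℚ ∙ 1) :
    pushP F = F ↔ IsYCyclic F := by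
  rw [← pushLin_apply]
  constructor
  · intro h u
    rw [← coeff_pushLin_pushW, pushW_mul_of_one, h]
  · intro h
    rw [← sub_eq_zero]
    have hone : pushLin 1 = 1 := by simpa using pushLin_X_pow 0
    apply eq_zero_of_dxLin_eq_zero
    · obtain ⟨c, hc⟩ := Submodule.mem_span_singleton.mp hF
      rw [map_sub, dxLin_pushLin, ← hc, map_smul, hone, sub_self]
    · have h1 : pushW 1 = 1 := by simpa using pushW_of_pow 0
      rw [MonoidAlgebra.coeff_sub, Finsupp.sub_apply, ← h1, coeff_pushLin_pushW, h1, sub_self]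
    · intro u
      rw [MonoidAlgebra.coeff_sub, Finsupp.sub_apply, ← pushW_mul_of_one, coeff_pushLin_pushW,
        pushW_mul_of_one, h, sub_self]

/-- for F ∈ Lie_n[x,y] with F = F_x·x + F_y·y,
    F_y is antipalindromic iff F is push-invariant. -/
theorem stmt7 (n : ℕ) (F : R2) (hF : InLieN n F)
    (Fx Fy : R2) (hdec : F = Fx * X + Fy * Y) :
    Antipal (n - 1) Fy ↔ pushP F = F := by
  have hrev := coeff_antiW_of_antipode_eq_neg (LieP_le_antipodeNegLie hF.1) hF.2
  rw [antipal_iff_isYCyclic hF.2 hrev hdec, pushP_eq_self_iff_isYCyclic (LieP_le_dxConstLie hF.1)]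

end DblSh
end
end

section
/- Let n ≥ 3 and let F, G ∈ Lie_n[x,y] satisfy [x,G] + [y,F] = 0 (i.e. the derivation D_{F,G} is special). Write F = F_x·x + F_y·y = x·F^x + y·F^y and G = G_x·x + G_y·y, and let A ∈ ℚ. Then tr(F_y·y + G_x·x) = A·tr((x+y)^n − x^n − y^n) holds in TR if and only if F^y − F^x is push-constant for the constant n·A. -/
noncomputable section
namespace DblSh

attribute [local instance] LieRing.ofAssociativeRing

/-
A polynomial without constant term is a sum of commutators iff all its cyclic sums
`ψ_z(P) = Σ_j (P | rotate_j z)` vanish: a word differs by commutators from the average of its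
rotations, and the coefficients of that average are the numbers `ψ_z(P) / |z|`. Cyclic sums of
Lie elements of degree at least 2 vanish.

The special condition `[x,G] + [y,F] = 0` gives `(F | y p) = (F | p y)` and `(F | x p) = (G | p y)`,
so `P = F_y y + G_x x` agrees with `F` on words ending in `y` and with `G` on words ending in `x`.
The rotations of `v y` ending in `y` are exactly the words `push^k(v) y`, hence
`ψ_{vy}(P) = Σ_{u ∈ Push(v)} (F^y - F^x | u)`. Finally `ψ_{vy}((x+y)^n - x^n - y^n) = n` when
`|v| = n - 1` and `v` contains an `x`, while all other cyclic sums of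
`P - A((x+y)^n - x^n - y^n)` vanish automatically.
-/

open Finset

def commutatorSpan (k A : Type*) [CommRing k] [Ring A] [Algebra k A] : Submodule k A :=
  Submodule.span k {c | ∃ a b : A, c = a * b - b * a}

theorem sum_range_add_of_periodic {M : Type*} [AddCommMonoid M] {f : ℕ → M} {n : ℕ}
    (hf : Function.Periodic f n) (m : ℕ) :
    ∑ j ∈ range n, f (j + m) = ∑ j ∈ range n, f j := by
  induction m with
  | zero => rfl
  | succ m ih =>
    rcases n with _ | n
    · rfl
    rw [← ih, sum_range_succ, sum_range_succ' (fun j => f (j + m))]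
    congr 1
    · simp only [add_assoc, add_comm 1 m]
    · simpa [add_comm, add_left_comm] using hf m

section Lists

variable {α : Type*}

theorem periodic_rotate (l : List α) : Function.Periodic l.rotate l.length := fun j => by
  rw [← List.rotate_mod, Nat.add_mod_right, List.rotate_mod]

theorem card_rotate_eq_comm [DecidableEq α] (l z : List α) :
    #{j ∈ range l.length | l.rotate j = z} = #{j ∈ range z.length | z.rotate j = l} := by
  rw [card_filter, card_filter]
  by_cases hlz : l.length = z.length
  swap
  · rw [sum_eq_zero, sum_eq_zero] <;> intro j _ <;> rw [if_neg] <;> intro h <;>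
      simp [← h] at hlz
  have hrefl : ∀ j ∈ range z.length, l.rotate j = z ↔ z.rotate (z.length - 1 - j + 1) = l := by
    intro j hj
    rw [List.rotate_eq_iff, Nat.mod_eq_of_lt (mem_range.mp hj),
      show z.length - 1 - j + 1 = z.length - j by have := mem_range.mp hj; omega, eq_comm]
  rw [hlz, sum_congr rfl fun j hj => if_congr (hrefl j hj) rfl rfl,
    sum_range_reflect (fun j => if z.rotate (j + 1) = l then 1 else 0) z.length]
  exact sum_range_add_of_periodic ((periodic_rotate z).comp fun r => if r = l then 1 else 0) 1

theorem rotate_succ_append_singleton (v : List α) (a : α) {i : ℕ} (hi : i < v.length) :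
    (v ++ [a]).rotate (i + 1) = (v.drop (i + 1) ++ a :: v.take i) ++ [v[i]] := by
  rw [List.rotate_eq_drop_append_take (by simp; omega), List.drop_append_of_le_length hi,
    List.take_append_of_le_length hi, List.take_add_one, List.getElem?_eq_getElem hi]
  simp

theorem sum_range_ite_count_drop {M : Type*} [DecidableEq α] [AddCommMonoid M] (a : α)
    (l : List α) (g : ℕ → M) :
    ∑ i ∈ range l.length, (if l[i]? = some a then g ((l.drop (i + 1)).count a) else 0) =
      ∑ k ∈ range (l.count a), g k := by
  induction l with
  | nil => simp
  | cons x t ih =>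
    rw [List.length_cons, sum_range_succ']
    simp only [List.getElem?_cons_succ, List.drop_succ_cons, ih, List.getElem?_cons_zero,
      Option.some.injEq, List.count_cons, beq_iff_eq]
    by_cases hx : x = a
    · simp [hx, sum_range_succ]
    · simp [hx]

theorem of_pow_eq_ofList_replicate (a : α) (n : ℕ) :
    FreeMonoid.of a ^ n = FreeMonoid.ofList (List.replicate n a) := by
  induction n with
  | zero => rfl
  | succ n ih => rw [pow_succ, ih, List.replicate_succ', FreeMonoid.ofList_append]; rfl

end Lists

section CyclicSum

variable {k α : Type*} [CommRing k]

def cyclicSum (z : List α) : MonoidAlgebra k (FreeMonoid α) →ₗ[k] k where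
  toFun P := ∑ j ∈ range z.length, P.coeff (FreeMonoid.ofList (z.rotate j))
  map_add' P Q := by simp [sum_add_distrib]
  map_smul' c P := by simp [mul_sum]

theorem cyclicSum_apply (z : List α) (P : MonoidAlgebra k (FreeMonoid α)) :
    cyclicSum z P = ∑ j ∈ range z.length, P.coeff (FreeMonoid.ofList (z.rotate j)) := rfl

theorem cyclicSum_rotate (z : List α) (m : ℕ) (P : MonoidAlgebra k (FreeMonoid α)) :
    cyclicSum (z.rotate m) P = cyclicSum z P := by
  simp only [cyclicSum_apply, List.length_rotate, List.rotate_rotate, add_comm m]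
  exact sum_range_add_of_periodic ((periodic_rotate z).comp fun r => P.coeff (.ofList r)) m

theorem cyclicSum_single [DecidableEq α] (z l : List α) (c : k) :
    cyclicSum z (MonoidAlgebra.single (FreeMonoid.ofList l) c) =
      ∑ j ∈ range z.length, if z.rotate j = l then c else 0 := by
  classical
  refine (cyclicSum_apply z _).trans (sum_congr rfl fun j _ => ?_)
  rw [MonoidAlgebra.coeff_single, Finsupp.single_apply]
  exact if_congr (by rw [EmbeddingLike.apply_eq_iff_eq, eq_comm]) rfl rfl

theorem cyclicSum_single_mul_comm (z u v : List α) (c d : k) :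
    cyclicSum z (MonoidAlgebra.single (FreeMonoid.ofList u) c *
        MonoidAlgebra.single (FreeMonoid.ofList v) d) =
      cyclicSum z (MonoidAlgebra.single (FreeMonoid.ofList v) d *
        MonoidAlgebra.single (FreeMonoid.ofList u) c) := by
  classical
  have hshift : ∀ j, z.rotate j = u ++ v ↔ z.rotate (j + u.length) = v ++ u := fun j => by
    rw [← List.rotate_rotate, ← List.rotate_append_length_eq u v]
    exact List.rotate_eq_rotate.symm
  simp only [MonoidAlgebra.single_mul_single, ← FreeMonoid.ofList_append, cyclicSum_single,
    hshift, mul_comm c d]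
  exact sum_range_add_of_periodic
    ((periodic_rotate z).comp fun r => if r = v ++ u then d * c else 0) _

theorem cyclicSum_mul_comm (z : List α) (a b : MonoidAlgebra k (FreeMonoid α)) :
    cyclicSum z (a * b) = cyclicSum z (b * a) := by
  induction a using MonoidAlgebra.induction_linear with
  | zero => simp
  | add a₁ a₂ h₁ h₂ => simp only [add_mul, mul_add, map_add, h₁, h₂]
  | single u c =>
    induction b using MonoidAlgebra.induction_linear with
    | zero => simp
    | add b₁ b₂ h₁ h₂ => simp only [add_mul, mul_add, map_add, h₁, h₂]
    | single v d => simpa using cyclicSum_single_mul_comm z u.toList v.toList c d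

theorem cyclicSum_eq_zero_of_mem_commutatorSpan (z : List α) {P : MonoidAlgebra k (FreeMonoid α)}
    (hP : P ∈ commutatorSpan k (MonoidAlgebra k (FreeMonoid α))) : cyclicSum z P = 0 := by
  refine (Submodule.span_le (p := LinearMap.ker (cyclicSum z)) |>.mpr ?_) hP
  rintro _ ⟨a, b, rfl⟩
  simp [cyclicSum_mul_comm z a]

theorem cyclicSum_eq_zero_of_mem_lieSpan (z : List α) {S : Set (MonoidAlgebra k (FreeMonoid α))}
    (hS : ∀ s ∈ S, cyclicSum z s = 0) {P : MonoidAlgebra k (FreeMonoid α)}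
    (hP : P ∈ LieSubalgebra.lieSpan k _ S) : cyclicSum z P = 0 := by
  let K : LieSubalgebra k (MonoidAlgebra k (FreeMonoid α)) :=
    { LinearMap.ker (cyclicSum z) with
      lie_mem' := fun {a b} _ _ => by simp [Ring.lie_def, cyclicSum_mul_comm z a] }
  exact (LieSubalgebra.lieSpan_le.mpr hS : _ ≤ K) hP

theorem cyclicSum_eq_zero_of_coeff_eq_zero (z : List α) {P : MonoidAlgebra k (FreeMonoid α)}
    (hP : ∀ l : List α, l.length = z.length → P.coeff (FreeMonoid.ofList l) = 0) :
    cyclicSum z P = 0 :=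
  (cyclicSum_apply z P).trans <| sum_eq_zero fun _ _ => hP _ (List.length_rotate _ _)

theorem cyclicSum_replicate (m : ℕ) (a : α) (P : MonoidAlgebra k (FreeMonoid α)) :
    cyclicSum (List.replicate m a) P = m * P.coeff (FreeMonoid.ofList (List.replicate m a)) := by
  simp [cyclicSum_apply, List.rotate_replicate]

theorem single_sub_single_rotate_mem_commutatorSpan (l : List α) (j : ℕ) (c : k) :
    MonoidAlgebra.single (FreeMonoid.ofList l) c -
        MonoidAlgebra.single (FreeMonoid.ofList (l.rotate j)) c ∈
      commutatorSpan k (MonoidAlgebra k (FreeMonoid α)) := by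
  refine Submodule.subset_span
    ⟨MonoidAlgebra.single (FreeMonoid.ofList (l.take (j % l.length))) c,
      MonoidAlgebra.single (FreeMonoid.ofList (l.drop (j % l.length))) 1, ?_⟩
  simp [MonoidAlgebra.single_mul_single, List.rotate_eq_drop_append_take_mod,
    ← FreeMonoid.ofList_append]

end CyclicSum

section Separation

variable {k α : Type*} [Field k]

def cyclicAverage (l : List α) : MonoidAlgebra k (FreeMonoid α) :=
  (l.length : k)⁻¹ •
    ∑ j ∈ range l.length, MonoidAlgebra.single (FreeMonoid.ofList (l.rotate j)) 1

theorem coeff_cyclicAverage (w : FreeMonoid α) (z : List α) :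
    (cyclicAverage w.toList : MonoidAlgebra k (FreeMonoid α)).coeff (FreeMonoid.ofList z) =
      (z.length : k)⁻¹ * cyclicSum z (MonoidAlgebra.single w 1) := by
  classical
  obtain ⟨l, rfl⟩ := FreeMonoid.ofList.surjective w
  rw [cyclicSum_single]
  simp only [cyclicAverage, FreeMonoid.toList_ofList, MonoidAlgebra.coeff_smul,
    MonoidAlgebra.coeff_sum, Finsupp.smul_apply, Finsupp.finsetSum_apply,
    MonoidAlgebra.coeff_single, Finsupp.single_apply, smul_eq_mul, EmbeddingLike.apply_eq_iff_eq,
    sum_boole, card_rotate_eq_comm l z]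
  by_cases hlz : l.length = z.length
  · rw [hlz]
  · rw [filter_false_of_mem fun j _ h => hlz (by simp [← h]), card_empty, Nat.cast_zero,
      mul_zero, mul_zero]

variable [CharZero k]

theorem single_sub_cyclicAverage_mem_commutatorSpan {l : List α} (hl : l ≠ []) (c : k) :
    MonoidAlgebra.single (FreeMonoid.ofList l) c - c • cyclicAverage l ∈
      commutatorSpan k (MonoidAlgebra k (FreeMonoid α)) := by
  have hn : (l.length : k) ≠ 0 := by simpa using hl
  have : MonoidAlgebra.single (FreeMonoid.ofList l) c - c • cyclicAverage l =
      (l.length : k)⁻¹ • ∑ j ∈ range l.length, (MonoidAlgebra.single (FreeMonoid.ofList l) c -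
        MonoidAlgebra.single (FreeMonoid.ofList (l.rotate j)) c) := by
    rw [sum_sub_distrib, sum_const, card_range, smul_sub, ← Nat.cast_smul_eq_nsmul k, smul_smul,
      inv_mul_cancel₀ hn, one_smul, cyclicAverage, smul_comm, smul_sum]
    simp
  rw [this]
  exact Submodule.smul_mem _ _
    (Submodule.sum_mem _ fun j _ => single_sub_single_rotate_mem_commutatorSpan l j c)

theorem mem_commutatorSpan_of_cyclicSum_eq_zero {P : MonoidAlgebra k (FreeMonoid α)}
    (h1 : P.coeff 1 = 0) (h : ∀ z, cyclicSum z P = 0) :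
    P ∈ commutatorSpan k (MonoidAlgebra k (FreeMonoid α)) := by
  have hT : (P.coeff.sum fun w c => c • cyclicAverage (k := k) w.toList) = 0 := by
    ext w
    obtain ⟨z, rfl⟩ := FreeMonoid.ofList.surjective w
    have hψ := h z
    rw [← MonoidAlgebra.sum_coeff_single P, map_finsuppSum] at hψ
    rw [MonoidAlgebra.coeff_zero, Finsupp.coe_zero, Pi.zero_apply,
      ← mul_zero (z.length : k)⁻¹, ← hψ, Finsupp.sum, Finsupp.sum, mul_sum,
      MonoidAlgebra.coeff_sum, Finsupp.finsetSum_apply]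
    refine sum_congr rfl fun w _ => ?_
    rw [MonoidAlgebra.coeff_smul, Finsupp.smul_apply, coeff_cyclicAverage, smul_eq_mul,
      ← mul_one (P.coeff w), ← MonoidAlgebra.smul_single', map_smul, smul_eq_mul, mul_one]
    ring
  have hdiff : P - (P.coeff.sum fun w c => c • cyclicAverage w.toList) ∈
      commutatorSpan k (MonoidAlgebra k (FreeMonoid α)) := by
    nth_rw 1 [← MonoidAlgebra.sum_coeff_single P]
    rw [← Finsupp.sum_sub]
    refine Submodule.finsuppSum_mem _ _ _ _ fun w _ => ?_
    by_cases hw : w = 1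
    · simp [hw, h1]
    · simpa using single_sub_cyclicAverage_mem_commutatorSpan (l := w.toList)
        (fun h => hw (FreeMonoid.toList.injective h)) (P.coeff w)
  simpa [hT] using hdiff

theorem mem_commutatorSpan_iff {P : MonoidAlgebra k (FreeMonoid α)} (h1 : P.coeff 1 = 0) :
    P ∈ commutatorSpan k (MonoidAlgebra k (FreeMonoid α)) ↔ ∀ z, cyclicSum z P = 0 :=
  ⟨fun hP z => cyclicSum_eq_zero_of_mem_commutatorSpan z hP,
    mem_commutatorSpan_of_cyclicSum_eq_zero h1⟩

end Separation

section Letters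

variable {k α : Type*} [CommRing k]

theorem coeff_mul_of_mul_of [DecidableEq α] (f : MonoidAlgebra k (FreeMonoid α))
    (w : FreeMonoid α) (a b : α) :
    (f * MonoidAlgebra.of k _ (FreeMonoid.of a)).coeff (w * FreeMonoid.of b) =
      if b = a then f.coeff w else 0 := by
  rw [MonoidAlgebra.of_apply]
  split_ifs with h
  · rw [h, MonoidAlgebra.coeff_mul_single_mul, mul_one]
  · refine MonoidAlgebra.coeff_mul_single_of_forall_mul_ne _ _ fun d hd => h ?_
    simpa using congrArg (fun u => u.toList.getLast?) hd.symm

theorem coeff_of_mul_of_mul [DecidableEq α] (f : MonoidAlgebra k (FreeMonoid α))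
    (w : FreeMonoid α) (a b : α) :
    (MonoidAlgebra.of k _ (FreeMonoid.of a) * f).coeff (FreeMonoid.of b * w) =
      if b = a then f.coeff w else 0 := by
  rw [MonoidAlgebra.of_apply]
  split_ifs with h
  · rw [h, MonoidAlgebra.coeff_single_mul_mul, one_mul]
  · refine MonoidAlgebra.coeff_single_mul_of_forall_mul_ne _ _ fun d hd => h ?_
    simpa using congrArg (fun u => u.toList.head?) hd.symm

theorem coeff_mul_of_one (f : MonoidAlgebra k (FreeMonoid α)) (a : α) :
    (f * MonoidAlgebra.of k _ (FreeMonoid.of a)).coeff 1 = 0 := by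
  rw [MonoidAlgebra.of_apply]
  refine MonoidAlgebra.coeff_mul_single_of_forall_mul_ne _ _ fun d hd => ?_
  simpa using congrArg (fun u => u.toList) hd

end Letters

theorem coeff_mul_X_add_mul_Y_s10 (a b : R2) (t : Word) (c : Fin 2) :
    (a * X + b * Y).coeff (t * FreeMonoid.of c) = if c = 0 then a.coeff t else b.coeff t := by
  rw [MonoidAlgebra.coeff_add, Finsupp.add_apply, X, Y, coeff_mul_of_mul_of, coeff_mul_of_mul_of]
  fin_cases c <;> simp

theorem coeff_X_mul_add_Y_mul (a b : R2) (t : Word) (c : Fin 2) :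
    (X * a + Y * b).coeff (FreeMonoid.of c * t) = if c = 0 then a.coeff t else b.coeff t := by
  rw [MonoidAlgebra.coeff_add, Finsupp.add_apply, X, Y, coeff_of_mul_of_mul, coeff_of_mul_of_mul]
  fin_cases c <;> simp

theorem coeff_of_mul_of_special {F G : R2} (hspec : (X * G - G * X) + (Y * F - F * Y) = 0)
    (c : Fin 2) (p : Word) :
    F.coeff (FreeMonoid.of c * p) =
      if c = 0 then G.coeff (p * FreeMonoid.of 1) else F.coeff (p * FreeMonoid.of 1) := by
  have hH : X * G + Y * F = G * X + F * Y := sub_eq_zero.mp (by rw [← hspec]; abel)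
  have := congrArg (fun f : R2 => f.coeff (FreeMonoid.of c * (p * FreeMonoid.of 1))) hH
  rw [coeff_X_mul_add_Y_mul, ← mul_assoc, coeff_mul_X_add_mul_Y_s10] at this
  fin_cases c <;> simpa using this.symm

theorem cyclicSum_eq_zero_of_mem_LieP {F : R2} (hF : F ∈ LieP) {z : List (Fin 2)}
    (hz : 2 ≤ z.length) : cyclicSum z F = 0 := by
  have hletter : ∀ c : Fin 2, cyclicSum z (MonoidAlgebra.of ℚ Word (FreeMonoid.of c)) = 0 :=
    fun c => cyclicSum_eq_zero_of_coeff_eq_zero z fun l hl => by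
      rw [MonoidAlgebra.of_apply, MonoidAlgebra.coeff_single, Finsupp.single_apply_eq_zero]
      intro h
      have := congrArg FreeMonoid.length h
      simp [FreeMonoid.length] at this
      omega
  refine cyclicSum_eq_zero_of_mem_lieSpan z (S := {X, Y}) ?_ hF
  rintro s (rfl | rfl)
  exacts [hletter 0, hletter 1]

theorem coeff_replicate_eq_zero_of_mem_LieP {F : R2} (hF : F ∈ LieP) {m : ℕ} (hm : 2 ≤ m)
    (c : Fin 2) : F.coeff (FreeMonoid.ofList (List.replicate m c)) = 0 := by
  have h := cyclicSum_eq_zero_of_mem_LieP hF (z := List.replicate m c) (by simpa using hm)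
  rw [cyclicSum_replicate] at h
  exact (mul_eq_zero.mp h).resolve_left (by norm_cast; omega)

theorem isHomog_iff {n : ℕ} {f : R2} : IsHomog n f ↔ ∀ w, wlen w ≠ n → f.coeff w = 0 :=
  forall_congr' fun w => by rw [Finsupp.mem_support_iff, not_imp_comm]

theorem IsHomog.sub {n : ℕ} {f g : R2} (hf : IsHomog n f) (hg : IsHomog n g) :
    IsHomog n (f - g) :=
  isHomog_iff.mpr fun w hw => by
    simp [MonoidAlgebra.coeff_sub, isHomog_iff.mp hf w hw, isHomog_iff.mp hg w hw]

theorem IsHomog.smul {n : ℕ} {f : R2} (hf : IsHomog n f) (c : ℚ) : IsHomog n (c • f) :=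
  isHomog_iff.mpr fun w hw => by simp [isHomog_iff.mp hf w hw]

theorem coeff_X_add_Y_pow (n : ℕ) (w : Word) :
    ((X + Y) ^ n).coeff w = if wlen w = n then 1 else 0 := by
  induction n generalizing w with
  | zero =>
    obtain ⟨l, rfl⟩ := FreeMonoid.ofList.surjective w
    rcases l with _ | ⟨c, l⟩
    · simp [wlen]
    · simp [MonoidAlgebra.one_def, wlen]
  | succ n ih =>
    obtain ⟨l, rfl⟩ := FreeMonoid.ofList.surjective w
    rcases List.eq_nil_or_concat l with rfl | ⟨t, c, rfl⟩
    · simp [pow_succ, mul_add, X, Y, wlen]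
    · rw [List.concat_eq_append, FreeMonoid.ofList_append, FreeMonoid.ofList_singleton, pow_succ,
        mul_add, MonoidAlgebra.coeff_add, Finsupp.add_apply, X, Y, coeff_mul_of_mul_of,
        coeff_mul_of_mul_of, ← X, ← Y, ih]
      fin_cases c <;> simp [wlen] <;> congr

theorem coeff_X_add_Y_pow_sub (n : ℕ) (l : List (Fin 2)) :
    ((X + Y) ^ n - X ^ n - Y ^ n).coeff (FreeMonoid.ofList l) =
      (if l.length = n then 1 else 0) - (if l = List.replicate n 0 then 1 else 0) -
        (if l = List.replicate n 1 then 1 else 0) := by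
  classical
  have hpow : ∀ c : Fin 2, (MonoidAlgebra.of ℚ Word (FreeMonoid.of c)) ^ n =
      MonoidAlgebra.single (FreeMonoid.ofList (List.replicate n c)) 1 := fun c => by
    rw [← map_pow, of_pow_eq_ofList_replicate, MonoidAlgebra.of_apply]
  rw [MonoidAlgebra.coeff_sub, MonoidAlgebra.coeff_sub, Finsupp.sub_apply, Finsupp.sub_apply,
    coeff_X_add_Y_pow, X, Y, hpow, hpow]
  simp [Finsupp.single_apply, eq_comm (b := l), wlen]
  congr

theorem isHomog_X_add_Y_pow_sub (n : ℕ) : IsHomog n ((X + Y) ^ n - X ^ n - Y ^ n) :=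
  isHomog_iff.mpr fun w hw => by
    obtain ⟨l, rfl⟩ := FreeMonoid.ofList.surjective w
    simp only [wlen, FreeMonoid.toList_ofList] at hw
    rw [coeff_X_add_Y_pow_sub, if_neg hw, if_neg (by rintro rfl; simp at hw),
      if_neg (by rintro rfl; simp at hw)]
    norm_num

theorem coeff_X_add_Y_pow_sub_replicate {n : ℕ} (hn : n ≠ 0) (c : Fin 2) :
    ((X + Y) ^ n - X ^ n - Y ^ n).coeff (FreeMonoid.ofList (List.replicate n c)) = 0 := by
  have hne : List.replicate n (0 : Fin 2) ≠ List.replicate n 1 := by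
    simp [hn]
  rw [coeff_X_add_Y_pow_sub]
  fin_cases c <;> simp [hne, hne.symm]

theorem cyclicSum_X_add_Y_pow_sub {n : ℕ} {z : List (Fin 2)} (hz : z.length = n) (h0 : 0 ∈ z)
    (h1 : 1 ∈ z) : cyclicSum z ((X + Y) ^ n - X ^ n - Y ^ n) = n := by
  have hterm : ∀ j ∈ range z.length,
      ((X + Y) ^ n - X ^ n - Y ^ n).coeff (FreeMonoid.ofList (z.rotate j)) = 1 := by
    intro j _
    have hn1 : z.rotate j ≠ List.replicate n 1 := fun h =>
      absurd (List.eq_of_mem_replicate (h ▸ (List.mem_rotate.mpr h0))) (by decide)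
    have hn0 : z.rotate j ≠ List.replicate n 0 := fun h =>
      absurd (List.eq_of_mem_replicate (h ▸ (List.mem_rotate.mpr h1))) (by decide)
    rw [coeff_X_add_Y_pow_sub, List.length_rotate, if_pos hz, if_neg hn0, if_neg hn1]
    norm_num
  rw [cyclicSum_apply, sum_congr rfl hterm, sum_const, card_range, hz, nsmul_one]

theorem forall_cyclicSum_eq_zero_iff {n : ℕ} {R : R2} (hR : IsHomog n R)
    (hR0 : R.coeff (FreeMonoid.ofList (List.replicate n 0)) = 0)
    (hR1 : R.coeff (FreeMonoid.ofList (List.replicate n 1)) = 0) :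
    (∀ z, cyclicSum z R = 0) ↔
      ∀ v : List (Fin 2), v.length + 1 = n → 0 ∈ v → cyclicSum (v ++ [1]) R = 0 := by
  refine ⟨fun h v _ _ => h _, fun h z => ?_⟩
  by_cases hz : z.length = n
  swap
  · exact cyclicSum_eq_zero_of_coeff_eq_zero z fun l hl =>
      isHomog_iff.mp hR _ (by simpa [wlen, hl] using hz)
  have hrep : ∀ c : Fin 2, (∀ b ∈ z, b = c) → cyclicSum z R = 0 := fun c hc => by
    rw [List.eq_replicate_iff.mpr ⟨hz, hc⟩, cyclicSum_replicate]
    fin_cases c <;> simp [hR0, hR1]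
  by_cases hz1 : 1 ∈ z
  swap
  · exact hrep 0 fun b hb => by fin_cases b <;> simp_all
  by_cases hz0 : 0 ∈ z
  swap
  · exact hrep 1 fun b hb => by fin_cases b <;> simp_all
  obtain ⟨s, t, rfl⟩ := List.append_of_mem hz1
  have hrot : (s ++ 1 :: t).rotate (s.length + 1) = (t ++ s) ++ [1] := by
    have := List.rotate_append_length_eq (s ++ [1]) t
    rw [List.append_assoc, List.singleton_append, List.length_append, List.length_singleton] at this
    rw [this, List.append_assoc]
  rw [← cyclicSum_rotate _ (s.length + 1), hrot]
  exact h _ (by simp at hz ⊢; omega) (by simp at hz0 ⊢; tauto)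

theorem pushW_append_cons_one {b c : List (Fin 2)} (hc : ∀ x ∈ c, x = 0) :
    pushW (FreeMonoid.ofList (b ++ 1 :: c)) = FreeMonoid.ofList (c ++ 1 :: b) := by
  have hc' : ∀ x ∈ c.reverse, decide (x = 0) = true := by simpa using hc
  simp [pushW, List.takeWhile_append_of_pos hc', List.dropWhile_append_of_pos hc']

theorem pushW_iterate_append_cons_one (b c : List (Fin 2)) :
    pushW^[c.count 1 + 1] (FreeMonoid.ofList (b ++ 1 :: c)) = FreeMonoid.ofList (c ++ 1 :: b) := by
  induction h : c.count 1 generalizing b c with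
  | zero =>
    refine pushW_append_cons_one fun x hx => ?_
    have : x ≠ 1 := fun h1 => by simp_all [List.count_eq_zero]
    omega
  | succ r ih =>
    obtain ⟨c₁, c₂, rfl, hc₁⟩ :=
      List.eq_append_cons_of_mem (List.count_pos_iff.mp (by omega : 0 < c.count 1))
    have hc₂ : c₂.count 1 = r := by simp_all [List.count_eq_zero_of_not_mem hc₁]
    rw [Function.iterate_succ_apply',
      show b ++ 1 :: (c₁ ++ 1 :: c₂) = (b ++ 1 :: c₁) ++ 1 :: c₂ by simp, ih _ _ hc₂,
      show c₂ ++ 1 :: (b ++ 1 :: c₁) = (c₂ ++ 1 :: b) ++ 1 :: c₁ by simp,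
      pushW_append_cons_one fun x hx => ?_]
    · simp
    · have : x ≠ 1 := fun h1 => hc₁ (h1 ▸ hx)
      omega

theorem cyclicSum_append_one_eq_sum_pushW {k : Type*} [CommRing k]
    {D : MonoidAlgebra k Word} (hD : ∀ t, D.coeff (t * FreeMonoid.of 0) = 0) (v : List (Fin 2)) :
    cyclicSum (v ++ [1]) D =
      ∑ k ∈ range (v.count 1 + 1), D.coeff (pushW^[k] (FreeMonoid.ofList v) * FreeMonoid.of 1) := by
  have hterm : ∀ i ∈ range v.length, D.coeff (FreeMonoid.ofList ((v ++ [1]).rotate (i + 1))) =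
      if v[i]? = some 1 then D.coeff (pushW^[(v.drop (i + 1)).count 1 + 1] (FreeMonoid.ofList v) *
        FreeMonoid.of 1) else 0 := by
    intro i hi
    have hi : i < v.length := mem_range.mp hi
    rw [rotate_succ_append_singleton v 1 hi, List.getElem?_eq_getElem hi,
      FreeMonoid.ofList_append, FreeMonoid.ofList_singleton]
    by_cases hvi : v[i] = 1
    · have hpush := pushW_iterate_append_cons_one (v.take i) (v.drop (i + 1))
      have hv : v.take i ++ 1 :: v.drop (i + 1) = v := by
        rw [← hvi, ← List.drop_eq_getElem_cons hi, List.take_append_drop]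
      rw [hv] at hpush
      rw [if_pos (by rw [hvi]), hpush, hvi]
    · rw [show v[i] = 0 by omega, hD, if_neg (by simp)]
  rw [cyclicSum_apply, List.length_append, List.length_singleton, sum_range_succ',
    sum_congr rfl hterm, sum_range_ite_count_drop 1 v
      (fun k => D.coeff (pushW^[k + 1] (FreeMonoid.ofList v) * FreeMonoid.of 1)),
    sum_range_succ' _ (v.count 1)]
  simp

theorem sum_map_PushList {M : Type*} [AddCommMonoid M] (g : Word → M) (w : Word) :
    ((PushList w).map g).sum = ∑ k ∈ range (countY w + 1), g (pushW^[k] w) := by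
  rw [PushList, List.map_map]
  rfl

theorem mem_zero_iff_ne_replicate_one {v : List (Fin 2)} :
    0 ∈ v ↔ v ≠ List.replicate v.length 1 := by
  rw [Ne, List.eq_replicate_iff]
  constructor
  · rintro h ⟨-, h'⟩
    exact absurd (h' 0 h) (by decide)
  · intro h
    by_contra h0
    exact h ⟨rfl, fun b hb => by fin_cases b <;> simp_all⟩

theorem pushConst_iff {m : ℕ} {f : R2} {c : ℚ}
    (hf : f.coeff (FreeMonoid.ofList (List.replicate m 1)) = 0) :
    PushConst m f c ↔ ∀ v : List (Fin 2), v.length = m → 0 ∈ v →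
      ((PushList (FreeMonoid.ofList v)).map (coeff f)).sum = c := by
  refine (and_iff_right hf).trans (FreeMonoid.ofList.surjective.forall.trans
    (forall_congr' fun v => imp_congr_right fun hv => imp_congr_left ?_))
  rw [mem_zero_iff_ne_replicate_one, yPow, Ne, EmbeddingLike.apply_eq_iff_eq]
  simp only [wlen, FreeMonoid.toList_ofList] at hv
  rw [hv]

section Decomposition

variable {F G Fx Fy FX FY Gx Gy : R2}

theorem coeff_Fy_mul_Y_add_Gx_mul_X (hFdec : F = Fx * X + Fy * Y) (hGdec : G = Gx * X + Gy * Y)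
    (t : Word) (c : Fin 2) :
    (Fy * Y + Gx * X).coeff (t * FreeMonoid.of c) =
      if c = 0 then G.coeff (t * FreeMonoid.of c) else F.coeff (t * FreeMonoid.of c) := by
  rw [add_comm, coeff_mul_X_add_mul_Y_s10, hFdec, hGdec, coeff_mul_X_add_mul_Y_s10, coeff_mul_X_add_mul_Y_s10]
  fin_cases c <;> simp

theorem coeff_FY_sub_FX (hFdec' : F = X * FX + Y * FY)
    (hspec : (X * G - G * X) + (Y * F - F * Y) = 0) (t : Word) :
    (FY - FX).coeff t = F.coeff (t * FreeMonoid.of 1) - G.coeff (t * FreeMonoid.of 1) := by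
  have hread : ∀ c, F.coeff (FreeMonoid.of c * t) = if c = 0 then FX.coeff t else FY.coeff t := by
    intro c
    rw [hFdec']
    exact coeff_X_mul_add_Y_mul FX FY t c
  have h0 := coeff_of_mul_of_special hspec 0 t
  have h1 := coeff_of_mul_of_special hspec 1 t
  rw [hread] at h0 h1
  simp only [if_pos, if_neg one_ne_zero] at h0 h1
  rw [MonoidAlgebra.coeff_sub, Finsupp.sub_apply, ← h0, ← h1]

theorem isHomog_Fy_mul_Y_add_Gx_mul_X {n : ℕ} (hF : IsHomog n F) (hG : IsHomog n G)
    (hFdec : F = Fx * X + Fy * Y) (hGdec : G = Gx * X + Gy * Y) : IsHomog n (Fy * Y + Gx * X) :=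
  isHomog_iff.mpr fun w hw => by
    obtain ⟨l, rfl⟩ := FreeMonoid.ofList.surjective w
    rcases List.eq_nil_or_concat l with rfl | ⟨t, c, rfl⟩
    · rw [MonoidAlgebra.coeff_add, Finsupp.add_apply, FreeMonoid.ofList_nil, Y, X,
        coeff_mul_of_one, coeff_mul_of_one, add_zero]
    · rw [List.concat_eq_append, FreeMonoid.ofList_append, FreeMonoid.ofList_singleton,
        coeff_Fy_mul_Y_add_Gx_mul_X hFdec hGdec] at *
      split_ifs
      exacts [isHomog_iff.mp hG _ hw, isHomog_iff.mp hF _ hw]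

theorem coeff_Fy_mul_Y_add_Gx_mul_X_replicate (hF : F ∈ LieP) (hG : G ∈ LieP)
    (hFdec : F = Fx * X + Fy * Y) (hGdec : G = Gx * X + Gy * Y) {n : ℕ} (hn : 2 ≤ n)
    (c : Fin 2) : (Fy * Y + Gx * X).coeff (FreeMonoid.ofList (List.replicate n c)) = 0 := by
  obtain ⟨m, rfl⟩ : ∃ m, n = m + 1 := ⟨n - 1, by omega⟩
  rw [List.replicate_succ', FreeMonoid.ofList_append, FreeMonoid.ofList_singleton,
    coeff_Fy_mul_Y_add_Gx_mul_X hFdec hGdec, ← FreeMonoid.ofList_singleton,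
    ← FreeMonoid.ofList_append, ← List.replicate_succ']
  split_ifs
  exacts [coeff_replicate_eq_zero_of_mem_LieP hG hn c, coeff_replicate_eq_zero_of_mem_LieP hF hn c]

theorem cyclicSum_append_one_Fy_mul_Y_add_Gx_mul_X (hFdec : F = Fx * X + Fy * Y)
    (hFdec' : F = X * FX + Y * FY) (hGdec : G = Gx * X + Gy * Y)
    (hspec : (X * G - G * X) + (Y * F - F * Y) = 0) (v : List (Fin 2)) :
    cyclicSum (v ++ [1]) (Fy * Y + Gx * X) =
      ((PushList (FreeMonoid.ofList v)).map (coeff (FY - FX))).sum + cyclicSum (v ++ [1]) G := by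
  have hP := coeff_Fy_mul_Y_add_Gx_mul_X hFdec hGdec
  have hD0 : ∀ t, (Fy * Y + Gx * X - G).coeff (t * FreeMonoid.of 0) = 0 := fun t => by
    rw [MonoidAlgebra.coeff_sub, Finsupp.sub_apply, hP, if_pos rfl, sub_self]
  rw [← sub_add_cancel (Fy * Y + Gx * X) G, map_add, cyclicSum_append_one_eq_sum_pushW hD0,
    sum_map_PushList]
  congr 1
  refine sum_congr rfl fun k _ => ?_
  rw [MonoidAlgebra.coeff_sub, Finsupp.sub_apply, hP, if_neg one_ne_zero, coeff,
    coeff_FY_sub_FX hFdec' hspec]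

theorem cyclicSum_append_one_sub_smul (hFdec : F = Fx * X + Fy * Y)
    (hFdec' : F = X * FX + Y * FY) (hGdec : G = Gx * X + Gy * Y)
    (hspec : (X * G - G * X) + (Y * F - F * Y) = 0) (hG : G ∈ LieP) {n : ℕ} (hn : 2 ≤ n)
    {v : List (Fin 2)} (hv : v.length + 1 = n) (hv0 : 0 ∈ v) (A : ℚ) :
    cyclicSum (v ++ [1]) (Fy * Y + Gx * X - A • ((X + Y) ^ n - X ^ n - Y ^ n)) =
      ((PushList (FreeMonoid.ofList v)).map (coeff (FY - FX))).sum - A * n := by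
  rw [map_sub, map_smul, cyclicSum_append_one_Fy_mul_Y_add_Gx_mul_X hFdec hFdec' hGdec hspec,
    cyclicSum_eq_zero_of_mem_LieP hG (by simp; omega),
    cyclicSum_X_add_Y_pow_sub (by simpa using hv) (by simp [hv0]) (by simp), add_zero,
    smul_eq_mul]

end Decomposition

/-- let n ≥ 3 and F,G ∈ Lie_n[x,y] with [x,G] + [y,F] = 0; write
    F = F_x·x + F_y·y = x·F^x + y·F^y and G = G_x·x + G_y·y.  Then for A ∈ ℚ,
    tr(F_y·y + G_x·x) = A·tr((x+y)^n − x^n − y^n) holds in TR iff F^y − F^x is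
    push-constant for the constant n·A. -/
theorem stmt10 (n : ℕ) (hn : 3 ≤ n) (F G : R2)
    (hF : InLieN n F) (hG : InLieN n G)
    (hspec : (X * G - G * X) + (Y * F - F * Y) = 0)
    (Fx Fy FX FY Gx Gy : R2)
    (hFdec : F = Fx * X + Fy * Y) (hFdec' : F = X * FX + Y * FY)
    (hGdec : G = Gx * X + Gy * Y)
    (A : ℚ) :
    trQ (Fy * Y + Gx * X) = A • trQ ((X + Y)^n - X^n - Y^n) ↔
      PushConst (n - 1) (FY - FX) ((n : ℚ) * A) := by
  have hR : IsHomog n (Fy * Y + Gx * X - A • ((X + Y) ^ n - X ^ n - Y ^ n)) :=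
    (isHomog_Fy_mul_Y_add_Gx_mul_X hF.2 hG.2 hFdec hGdec).sub ((isHomog_X_add_Y_pow_sub n).smul A)
  have hcorner : ∀ c : Fin 2, (Fy * Y + Gx * X - A • ((X + Y) ^ n - X ^ n - Y ^ n)).coeff
      (FreeMonoid.ofList (List.replicate n c)) = 0 := fun c => by
    rw [MonoidAlgebra.coeff_sub, Finsupp.sub_apply, MonoidAlgebra.coeff_smul_apply,
      coeff_Fy_mul_Y_add_Gx_mul_X_replicate hF.1 hG.1 hFdec hGdec (by omega),
      coeff_X_add_Y_pow_sub_replicate (by omega), smul_zero, sub_zero]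
  have hf : (FY - FX).coeff (FreeMonoid.ofList (List.replicate (n - 1) 1)) = 0 := by
    rw [coeff_FY_sub_FX hFdec' hspec, ← FreeMonoid.ofList_singleton, ← FreeMonoid.ofList_append,
      ← List.replicate_succ', Nat.sub_add_cancel (by omega : 1 ≤ n),
      coeff_replicate_eq_zero_of_mem_LieP hF.1 (by omega),
      coeff_replicate_eq_zero_of_mem_LieP hG.1 (by omega), sub_zero]
  rw [← map_smul, trQ, Submodule.mkQ_apply, Submodule.mkQ_apply, Submodule.Quotient.eq,
    show trIdeal = commutatorSpan ℚ R2 from rfl,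
    mem_commutatorSpan_iff (isHomog_iff.mp hR 1 (by simp [wlen]; omega)),
    forall_cyclicSum_eq_zero_iff hR (hcorner 0) (hcorner 1), pushConst_iff hf]
  refine forall_congr' fun v => ?_
  rw [show v.length + 1 = n ↔ v.length = n - 1 by omega]
  refine imp_congr_right fun hv => imp_congr_right fun hv0 => ?_
  rw [cyclicSum_append_one_sub_smul hFdec hFdec' hGdec hspec hG.1 (by omega) (by omega) hv0,
    sub_eq_zero, mul_comm]

end DblSh
end
end
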